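/- Let (f_i)_{i=1}^{n+1} be a Parseval frame of n+1 vectors for ℝⁿ. Then there exists a unique sequence of scalars (g_i)_{i=1}^{n+1} ∈ ℝ^{n+1} such that the sequence (f_i ⊕ g_i)_{i=1}^{n+1} is an orthonormal basis of ℝⁿ ⊕ ℝ = ℝ^{n+1} and the (n+1) × (n+1) matrix whose columns are the vectors f_i ⊕ g_i has determinant 1. Moreover, the only other scalar sequence making (f_i ⊕ g_i)_{i=1}^{n+1} an orthonormal basis is (-g_i)_{i=1}^{n+1}. -/

import Mathlib

/-!
Let `T` be the `n × (n+1)` matrix whose columns are the `f i`. The Parseval identity says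
`T Tᵀ = 1`, i.e. the rows of `T` are orthonormal. The matrix with columns `f i ⊕ g i` is `T`
with the row `g` appended, so it is orthogonal exactly when `g` is a unit vector in `ker T`.
By rank–nullity such a `g` exists. If `M` is the orthogonal matrix built from `g` and `w` is
another unit vector of `ker T`, then `M w = ⟨g, w⟩ eₙ`, so `w = Mᵀ M w = ⟨g, w⟩ g = ± g`.
Negating the last row negates the determinant, which singles out one sign.
-/

open scoped RealInnerProductSpace

/-- For `f : Fin (n+1) → ℝⁿ` and scalars `g : Fin (n+1) → ℝ`, the family of vectors
`f i ⊕ g i` in `ℝⁿ ⊕ ℝ ≅ ℝ^(n+1)`. -/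
noncomputable def snocFamily {n : ℕ} (f : Fin (n + 1) → EuclideanSpace ℝ (Fin n))
    (g : Fin (n + 1) → ℝ) : Fin (n + 1) → EuclideanSpace ℝ (Fin (n + 1)) :=
  fun i => WithLp.toLp 2 (Fin.snoc (f i) (g i) : Fin (n + 1) → ℝ)

/-- A family of `k` vectors in `ℝᵏ` is an orthonormal basis. -/
def IsONBFamily {k : ℕ} (v : Fin k → EuclideanSpace ℝ (Fin k)) : Prop :=
  ∃ b : OrthonormalBasis (Fin k) ℝ (EuclideanSpace ℝ (Fin k)), ∀ i, b i = v i

open Matrix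

namespace Matrix

variable {R κ : Type*} {n : ℕ}

def snocRow (A : Matrix (Fin n) κ R) (v : κ → R) : Matrix (Fin (n + 1)) κ R :=
  -- `fun i => A i` rather than `A`: `Matrix` is not reducibly a function type, and with `A`
  -- the motive of `Fin.snoc` would not match its simp lemmas.
  of (Fin.snoc (fun i => A i) v)

@[simp]
theorem snocRow_castSucc (A : Matrix (Fin n) κ R) (v : κ → R) (i : Fin n) :
    A.snocRow v i.castSucc = A i :=
  Fin.snoc_castSucc (α := fun _ => κ → R) ..

@[simp]
theorem snocRow_last (A : Matrix (Fin n) κ R) (v : κ → R) : A.snocRow v (Fin.last n) = v :=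
  Fin.snoc_last (α := fun _ => κ → R) ..

theorem snocRow_mul_transpose_eq_one_iff [CommRing R] [Fintype κ] (A : Matrix (Fin n) κ R)
    (v : κ → R) :
    A.snocRow v * (A.snocRow v)ᵀ = 1 ↔ A * Aᵀ = 1 ∧ A *ᵥ v = 0 ∧ v ⬝ᵥ v = 1 := by
  simp only [← ext_iff, funext_iff, Fin.forall_fin_succ', mul_apply, transpose_apply, one_apply,
    snocRow_castSucc, snocRow_last, Fin.castSucc_inj, (Fin.castSucc_lt_last _).ne,
    (Fin.castSucc_lt_last _).ne', ↓reduceIte, mulVec, dotProduct, Pi.zero_apply, mul_comm,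
    and_congr_left_iff, and_imp]
  exact fun hAv _ => ⟨fun h i j => (h i).1 j, fun h i => ⟨h i, hAv i⟩⟩

theorem det_snocRow_neg [CommRing R] (A : Matrix (Fin n) (Fin (n + 1)) R)
    (v : Fin (n + 1) → R) :
    (A.snocRow (-v)).det = -(A.snocRow v).det := by
  have : A.snocRow (-v) =
      (A.snocRow v).updateRow (Fin.last n) ((-1 : R) • A.snocRow v (Fin.last n)) := by
    ext j k
    induction j using Fin.lastCases <;> simp
  rw [this, det_updateRow_smul, updateRow_eq_self, neg_one_mul]

theorem det_eq_one_or_eq_neg_one_of_mem_orthogonalGroup [CommRing R] [NoZeroDivisors R]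
    [Fintype κ] [DecidableEq κ] {M : Matrix κ κ R} (hM : M ∈ orthogonalGroup κ R) :
    M.det = 1 ∨ M.det = -1 :=
  mul_self_eq_one_iff.1 <| by
    simpa using congrArg det ((mem_orthogonalGroup_iff _ _).1 hM)

theorem eq_or_eq_neg_of_snocRow_mem_orthogonalGroup [CommRing R] [NoZeroDivisors R]
    {A : Matrix (Fin n) (Fin (n + 1)) R} {v w : Fin (n + 1) → R}
    (hA : A.snocRow v ∈ orthogonalGroup (Fin (n + 1)) R) (hw : A *ᵥ w = 0)
    (hww : w ⬝ᵥ w = 1) :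
    w = v ∨ w = -v := by
  set M := A.snocRow v
  have hMw : M *ᵥ w = Pi.single (Fin.last n) (v ⬝ᵥ w) := by
    ext j
    induction j using Fin.lastCases with
    | last => simp [M, mulVec]
    | cast k => simpa [M, mulVec, (Fin.castSucc_lt_last k).ne] using congrFun hw k
  have hw_eq : w = (v ⬝ᵥ w) • v :=
    calc w = Mᵀ *ᵥ (M *ᵥ w) := by
          rw [mulVec_mulVec, (mem_orthogonalGroup_iff' _ _).1 hA, one_mulVec]
      _ = (v ⬝ᵥ w) • v := by rw [hMw, mulVec_transpose, single_vecMul]; simp [M, row]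
  have hvv : v ⬝ᵥ v = 1 :=
    ((snocRow_mul_transpose_eq_one_iff A v).1 ((mem_orthogonalGroup_iff _ _).1 hA)).2.2
  have hc : (v ⬝ᵥ w) * (v ⬝ᵥ w) = 1 :=
    calc (v ⬝ᵥ w) * (v ⬝ᵥ w) = ((v ⬝ᵥ w) • v) ⬝ᵥ ((v ⬝ᵥ w) • v) := by simp [hvv]
      _ = 1 := by rw [← hw_eq, hww]
  rcases mul_self_eq_one_iff.1 hc with h | h
  · left; rw [hw_eq, h, one_smul]
  · right; rw [hw_eq, h, neg_one_smul]

end Matrix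

theorem exists_mulVec_eq_zero_dotProduct_self_eq_one {m k : Type*} [Fintype m] [Fintype k]
    (A : Matrix m k ℝ) (h : Fintype.card m < Fintype.card k) :
    ∃ v, A *ᵥ v = 0 ∧ v ⬝ᵥ v = 1 := by
  obtain ⟨u, hu, hu0⟩ := Submodule.exists_mem_ne_zero_of_ne_bot
    (LinearMap.ker_ne_bot_of_finrank_lt (f := A.mulVecLin) (by simpa using h))
  have hAu : A *ᵥ u = 0 := by simpa using hu
  have hpos : 0 < u ⬝ᵥ u :=
    lt_of_le_of_ne (Finset.sum_nonneg fun i _ => mul_self_nonneg (u i))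
      (Ne.symm (dotProduct_self_eq_zero.not.2 hu0))
  refine ⟨(√(u ⬝ᵥ u))⁻¹ • u, by rw [mulVec_smul, hAu, smul_zero], ?_⟩
  rw [smul_dotProduct, dotProduct_smul, smul_smul, smul_eq_mul, ← mul_inv,
    Real.mul_self_sqrt hpos.le, inv_mul_cancel₀ hpos.ne']

theorem isONBFamily_iff_orthonormal {k : ℕ} (v : Fin k → EuclideanSpace ℝ (Fin k)) :
    IsONBFamily v ↔ Orthonormal ℝ v := by
  refine ⟨fun ⟨b, hb⟩ => funext hb ▸ b.orthonormal, fun hv => ?_⟩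
  have hcard : Fintype.card (Fin k) = Module.finrank ℝ (EuclideanSpace ℝ (Fin k)) := by simp
  exact ⟨.mk hv (hv.linearIndependent.span_eq_top_of_card_eq_finrank' hcard).ge, fun i => by simp⟩

theorem orthonormal_toLp_iff_mul_transpose {ι κ : Type*} [Fintype κ] [DecidableEq ι]
    (A : Matrix ι κ ℝ) : Orthonormal ℝ (fun i => WithLp.toLp 2 (A i)) ↔ A * Aᵀ = 1 := by
  simp only [orthonormal_iff_ite, EuclideanSpace.inner_toLp_toLp, ← Matrix.ext_iff, mul_apply,
    one_apply, transpose_apply, star_trivial, dotProduct, mul_comm]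

theorem isONBFamily_iff_mem_orthogonalGroup {k : ℕ} (v : Fin k → EuclideanSpace ℝ (Fin k)) :
    IsONBFamily v ↔ (Matrix.of fun j i => v i j) ∈ orthogonalGroup (Fin k) ℝ := by
  rw [isONBFamily_iff_orthonormal, mem_orthogonalGroup_iff']
  exact orthonormal_toLp_iff_mul_transpose (of fun i j => v i j)

/-- The matrix of the synthesis operator `c ↦ ∑ i, c i • f i`. -/
def synthesisMatrix {ι κ : Type*} (f : ι → EuclideanSpace ℝ κ) : Matrix κ ι ℝ :=
  Matrix.of fun k i => f i k

theorem synthesisMatrix_mul_transpose_of_parseval {ι κ : Type*} [Fintype ι] [Fintype κ]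
    [DecidableEq κ] (f : ι → EuclideanSpace ℝ κ) (hf : ∀ x, ∑ i, ⟪f i, x⟫ • f i = x) :
    synthesisMatrix f * (synthesisMatrix f)ᵀ = 1 := by
  ext j k
  simpa [synthesisMatrix, mul_apply, one_apply, eq_comm, mul_comm,
    EuclideanSpace.inner_single_right] using congrArg (· j) (hf (EuclideanSpace.single k 1))

theorem of_snocFamily {n : ℕ} (f : Fin (n + 1) → EuclideanSpace ℝ (Fin n))
    (g : Fin (n + 1) → ℝ) :
    (Matrix.of fun j i => snocFamily f g i j) = (synthesisMatrix f).snocRow g := by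
  ext j i
  induction j using Fin.lastCases <;> simp [snocFamily, synthesisMatrix]

/-- a Parseval frame `(f i)` of `n+1` vectors for `ℝⁿ` admits a unique
sequence of scalars `(g i)` such that `(f i ⊕ g i)` is an orthonormal basis of
`ℝⁿ ⊕ ℝ = ℝ^(n+1)` whose column matrix has determinant `1`; moreover the only other
scalar sequence making `(f i ⊕ g i)` an orthonormal basis is `(-g i)`. -/
theorem parseval_frame_codim_one_dilation {n : ℕ}
    (f : Fin (n + 1) → EuclideanSpace ℝ (Fin n))
    (hf : ∀ x : EuclideanSpace ℝ (Fin n), ∑ i, ⟪f i, x⟫ • f i = x) :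
    ∃ g : Fin (n + 1) → ℝ,
      (IsONBFamily (snocFamily f g) ∧
        Matrix.det (Matrix.of fun j i => snocFamily f g i j) = 1) ∧
      (∀ g' : Fin (n + 1) → ℝ,
        (IsONBFamily (snocFamily f g') ∧
          Matrix.det (Matrix.of fun j i => snocFamily f g' i j) = 1) → g' = g) ∧
      (∀ g' : Fin (n + 1) → ℝ,
        IsONBFamily (snocFamily f g') → g' = g ∨ g' = fun i => -g i) := by
  set T := synthesisMatrix f
  have hT : T * Tᵀ = 1 := synthesisMatrix_mul_transpose_of_parseval f hf
  have hM (g : Fin (n + 1) → ℝ) :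
      IsONBFamily (snocFamily f g) ↔ T.snocRow g ∈ orthogonalGroup (Fin (n + 1)) ℝ := by
    rw [isONBFamily_iff_mem_orthogonalGroup, of_snocFamily]
  have hadm (g : Fin (n + 1) → ℝ) :
      IsONBFamily (snocFamily f g) ↔ T *ᵥ g = 0 ∧ g ⬝ᵥ g = 1 := by
    rw [hM, mem_orthogonalGroup_iff, snocRow_mul_transpose_eq_one_iff, and_iff_right hT]
  obtain ⟨g₀, hg₀⟩ := exists_mulVec_eq_zero_dotProduct_self_eq_one T (by simp)
  obtain ⟨g, hg, hdet⟩ : ∃ g, IsONBFamily (snocFamily f g) ∧ (T.snocRow g).det = 1 := by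
    have hg₀' := (hadm g₀).2 hg₀
    rcases det_eq_one_or_eq_neg_one_of_mem_orthogonalGroup ((hM g₀).1 hg₀') with h | h
    · exact ⟨g₀, hg₀', h⟩
    · refine ⟨-g₀, (hadm _).2 (by simpa [mulVec_neg] using hg₀), ?_⟩
      rw [det_snocRow_neg, h, neg_neg]
  have hpm (g' : Fin (n + 1) → ℝ) (hg' : IsONBFamily (snocFamily f g')) : g' = g ∨ g' = -g :=
    eq_or_eq_neg_of_snocRow_mem_orthogonalGroup ((hM g).1 hg) ((hadm g').1 hg').1
      ((hadm g').1 hg').2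
  refine ⟨g, ⟨hg, of_snocFamily f g ▸ hdet⟩, fun g' ⟨hg', hdet'⟩ => ?_, hpm⟩
  refine (hpm g' hg').resolve_right ?_
  rintro rfl
  rw [of_snocFamily, det_snocRow_neg, hdet] at hdet'
  norm_num at hdet'
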